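/- For a single Dirac mass: if m, m' ∈ ℝ and x, x' ∈ ℝ₊, then d(m δ_x, m' δ_{x'}) ≤ max{1, |m|} · (|m − m'| + |x − x'|), where d is the flat (bounded Lipschitz) distance. -/
import Mathlib


open Set Filter

/-- The flat (bounded Lipschitz) distance between the signed Dirac masses
`m δ_x` and `m' δ_{x'}`, defined via `C¹` test functions with values in `[-1,1]`
and Lipschitz constant `≤ 1`. -/
noncomputable def flatDistDirac (m x m' x' : ℝ) : ℝ :=
  sSup {r | ∃ φ : ℝ → ℝ, ContDiff ℝ 1 φ ∧ (∀ s, |φ s| ≤ 1) ∧ LipschitzWith 1 φ ∧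
    r = m * φ x - m' * φ x'}

theorem flatDist_single_dirac (m m' x x' : ℝ) (hx : 0 ≤ x) (hx' : 0 ≤ x') :
    flatDistDirac m x m' x' ≤ max 1 |m| * (|m - m'| + |x - x'|) := by
  have hM1 : (1:ℝ) ≤ max 1 |m| := le_max_left _ _
  have hbound : 0 ≤ max 1 |m| * (|m - m'| + |x - x'|) := by positivity
  refine Real.sSup_le ?_ hbound
  rintro r ⟨φ, hC, hb, hlip, rfl⟩
  have hdiff : |φ x - φ x'| ≤ |x - x'| := by
    have := hlip.dist_le_mul x x'
    simpa [Real.dist_eq] using this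
  have key : m * φ x - m' * φ x' = m * (φ x - φ x') + (m - m') * φ x' := by ring
  calc m * φ x - m' * φ x' ≤ |m * (φ x - φ x') + (m - m') * φ x'| := by
        rw [← key]; exact le_abs_self _
    _ ≤ |m| * |φ x - φ x'| + |m - m'| * |φ x'| := by
        refine (abs_add_le _ _).trans ?_
        rw [abs_mul, abs_mul]
    _ ≤ max 1 |m| * |x - x'| + max 1 |m| * |m - m'| := by
        refine add_le_add ?_ ?_
        · exact mul_le_mul (le_max_right _ _) hdiff (abs_nonneg _) (le_trans zero_le_one hM1)
        · calc |m - m'| * |φ x'| ≤ |m - m'| * 1 := by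
                gcongr; exact hb x'
          _ = 1 * |m - m'| := by ring
          _ ≤ max 1 |m| * |m - m'| := by gcongr
    _ = max 1 |m| * (|m - m'| + |x - x'|) := by ring
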